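/- There is a universal constant C > 0 with the following property. Let X be a compact metric space, let 𝓕 be a finite-dimensional Banach space that is a linear subspace of C(X) embedded in C(X), and let L ≥ 1 be such that H_ε(U_𝓕) ≤ L·log₂(1/ε) for all ε ∈ (0, 1/2], where U_𝓕 is the unit ball of 𝓕 and H_ε is metric entropy in the sup-norm metric. There exists a prediction strategy that guarantees, for every sequence of signals x₁, x₂, … ∈ X and observations y₁, y₂, … ∈ [−1, 1], for all N = 2, 3, … and all F ∈ 𝓕: Σ_{n=1}^N (yₙ − μₙ)² ≤ Σ_{n=1}^N (yₙ − F(xₙ))² + C·L·( log₂⁺ ‖F‖_𝓕 + log₂ N ), where log₂⁺ t := log₂ t if t ≥ 1 and 0 otherwise. -/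

import Mathlib

open scoped BigOperators

universe u v

/-- Given a prediction strategy `σ` and sequences of signals `x` and observations `y`,
`preds σ x y n` is the prediction output on round `n`. -/
noncomputable def preds {X P : Type*} (σ : List (X × P) → X → P)
    (x : ℕ → X) (y : ℕ → P) (n : ℕ) : P :=
  σ ((List.range n).map fun i => (x i, y i)) (x n)

/-- The minimal number of points of `A` forming an `ε`-net for `A`. -/
noncomputable def coveringNumber {E : Type*} [MetricSpace E] (A : Set E) (ε : ℝ) : ℕ :=
  sInf {n : ℕ | ∃ S : Finset E, ↑S ⊆ A ∧ S.card = n ∧ ∀ a ∈ A, ∃ b ∈ S, dist a b ≤ ε}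

/-- Metric entropy: binary logarithm of the minimal size of an `ε`-net. -/
noncomputable def metricEntropy {E : Type*} [MetricSpace E] (A : Set E) (ε : ℝ) : ℝ :=
  Real.logb 2 (coveringNumber A ε)

/-- `log₂⁺ t = log₂ t` if `t ≥ 1`, and `0` otherwise. -/
noncomputable def log2plus (t : ℝ) : ℝ := if 1 ≤ t then Real.logb 2 t else 0


noncomputable section OLRAux


/-- Clip a real number to `[-1, 1]`. -/
def clip (t : ℝ) : ℝ := max (-1) (min 1 t)

lemma clip_mem (t : ℝ) : clip t ∈ Set.Icc (-1 : ℝ) 1 := by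
  constructor
  · exact le_max_left _ _
  · exact max_le (by norm_num) (min_le_left _ _)

lemma clip_eq_self {t : ℝ} (h : t ∈ Set.Icc (-1 : ℝ) 1) : clip t = t := by
  unfold clip
  rw [min_eq_right h.2, max_eq_right h.1]

lemma clip_lip (a b : ℝ) : |clip a - clip b| ≤ |a - b| := by
  unfold clip
  rw [max_comm (-1) (min 1 a), max_comm (-1) (min 1 b)]
  refine le_trans (abs_max_sub_max_le_abs _ _ _) ?_
  refine le_trans (abs_min_sub_min_le_max _ _ _ _) ?_
  simp

lemma clip_sq_le {y : ℝ} (hy : y ∈ Set.Icc (-1 : ℝ) 1) (t : ℝ) :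
    (y - clip t) ^ 2 ≤ (y - t) ^ 2 := by
  have h1 : |y - clip t| ≤ |y - t| := by
    have := clip_lip y t
    rwa [clip_eq_self hy] at this
  calc (y - clip t) ^ 2 = |y - clip t| ^ 2 := (sq_abs _).symm
    _ ≤ |y - t| ^ 2 := by
        exact pow_le_pow_left₀ (abs_nonneg _) h1 2
    _ = (y - t) ^ 2 := sq_abs _

lemma loss_close {y a b ε : ℝ} (hy : y ∈ Set.Icc (-1 : ℝ) 1)
    (ha : a ∈ Set.Icc (-1 : ℝ) 1) (hb : b ∈ Set.Icc (-1 : ℝ) 1)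
    (hab : |a - b| ≤ ε) :
    (y - a) ^ 2 ≤ (y - b) ^ 2 + 4 * ε := by
  have h4 : (b - a) * (2 * y - a - b) ≤ ε * 4 := by
    refine le_trans (le_abs_self _) ?_
    rw [abs_mul]
    have h5 : |b - a| ≤ ε := by rwa [abs_sub_comm]
    have h6 : |2 * y - a - b| ≤ 4 := by
      rw [abs_le]
      obtain ⟨hy1, hy2⟩ := hy; obtain ⟨ha1, ha2⟩ := ha; obtain ⟨hb1, hb2⟩ := hb
      constructor <;> linarith
    exact mul_le_mul h5 h6 (abs_nonneg _) (le_trans (abs_nonneg _) h5)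
  have hid : (y - a) ^ 2 = (y - b) ^ 2 + (b - a) * (2 * y - a - b) := by ring
  linarith

lemma concave_exp_loss {y : ℝ} (hy : y ∈ Set.Icc (-1 : ℝ) 1) :
    ConcaveOn ℝ (Set.Icc (-1 : ℝ) 1) (fun μ : ℝ => Real.exp (-(y - μ) ^ 2 / 8)) := by
  have hg : ∀ μ : ℝ, HasDerivAt (fun μ : ℝ => -(y - μ) ^ 2 / 8) ((y - μ) / 4) μ := by
    intro μ
    have h1 : HasDerivAt (fun μ : ℝ => y - μ) (-1) μ := (hasDerivAt_id μ).const_sub y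
    have h2 := ((h1.pow 2).neg).div_const 8
    refine h2.congr_deriv ?_
    ring
  have hf : ∀ μ : ℝ, HasDerivAt (fun μ : ℝ => Real.exp (-(y - μ) ^ 2 / 8))
      ((y - μ) / 4 * Real.exp (-(y - μ) ^ 2 / 8)) μ := by
    intro μ
    have := (hg μ).exp
    convert this using 1
    ring
  have hf' : ∀ μ : ℝ, HasDerivAt
      (fun μ : ℝ => (y - μ) / 4 * Real.exp (-(y - μ) ^ 2 / 8))
      (((y - μ) ^ 2 / 16 - 1 / 4) * Real.exp (-(y - μ) ^ 2 / 8)) μ := by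
    intro μ
    have h1 : HasDerivAt (fun μ : ℝ => (y - μ) / 4) (-(1 / 4)) μ := by
      have := ((hasDerivAt_id μ).const_sub y).div_const 4
      refine this.congr_deriv ?_
      norm_num
    have h2 := h1.mul (hf μ)
    refine h2.congr_deriv ?_
    ring
  refine concaveOn_of_hasDerivWithinAt2_nonpos (convex_Icc _ _)
    (Continuous.continuousOn (by fun_prop)) (fun μ _ => (hf μ).hasDerivWithinAt)
    (fun μ _ => (hf' μ).hasDerivWithinAt) ?_
  intro μ hμ
  rw [interior_Icc] at hμ
  have h1 : (y - μ) ^ 2 ≤ 4 := by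
    obtain ⟨h2, h3⟩ := hμ; obtain ⟨h4, h5⟩ := hy
    nlinarith
  apply mul_nonpos_of_nonpos_of_nonneg
  · linarith
  · positivity

lemma centerMass_real {ι : Type*} (t : Finset ι) (w z : ι → ℝ) :
    t.centerMass w z = (∑ i ∈ t, w i * z i) / ∑ i ∈ t, w i := by
  rw [Finset.centerMass]
  simp only [smul_eq_mul, div_eq_inv_mul]

lemma jensen_step {ι : Type*} {y : ℝ} (hy : y ∈ Set.Icc (-1 : ℝ) 1) (t : Finset ι)
    (w p : ι → ℝ) (hw : ∀ i ∈ t, 0 ≤ w i) (hpos : 0 < ∑ i ∈ t, w i)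
    (hp : ∀ i ∈ t, p i ∈ Set.Icc (-1 : ℝ) 1) :
    ∑ i ∈ t, w i * Real.exp (-(y - p i) ^ 2 / 8) ≤
      Real.exp (-(y - (∑ i ∈ t, w i * p i) / ∑ i ∈ t, w i) ^ 2 / 8) * ∑ i ∈ t, w i := by
  have h := (concave_exp_loss hy).le_map_centerMass hw hpos hp
  rw [centerMass_real, centerMass_real] at h
  have h2 : (∑ i ∈ t, w i * (fun μ : ℝ => Real.exp (-(y - μ) ^ 2 / 8)) (p i)) / ∑ i ∈ t, w i ≤
      Real.exp (-(y - (∑ i ∈ t, w i * p i) / ∑ i ∈ t, w i) ^ 2 / 8) := h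
  rw [div_le_iff₀ hpos] at h2
  exact h2

lemma sum_halves (N : ℕ) : ∑ k ∈ Finset.range N, ((2 : ℝ)⁻¹) ^ (k + 1) ≤ 1 := by
  have h : ∀ n : ℕ, ∑ k ∈ Finset.range n, ((2 : ℝ)⁻¹) ^ (k + 1) = 1 - (2 : ℝ)⁻¹ ^ n := by
    intro n
    induction n with
    | zero => simp
    | succ m ih => rw [Finset.sum_range_succ, ih]; ring
  rw [h]
  have : (0:ℝ) ≤ (2 : ℝ)⁻¹ ^ N := by positivity
  linarith

/-- Prior weight of expert class `k`. -/
def pri (L : ℝ) (k : ℕ) : ℝ := Real.exp (-((1 + 2 * L) * ((k : ℝ) + 1)) * Real.log 2)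

lemma pri_pos (L : ℝ) (k : ℕ) : 0 < pri L k := Real.exp_pos _

/-- Clipped prediction of the expert `(k, g)`. -/
def epred {X : Type*} [TopologicalSpace X] (k : ℕ) (g : C(X, ℝ)) (x : X) : ℝ :=
  clip ((2 : ℝ) ^ (k + 1) * g x)

/-- Weight of expert `(k, g)` at round `n`. -/
def wt {X : Type*} [TopologicalSpace X] (L : ℝ) (xs : ℕ → X) (ys : ℕ → ℝ) (n k : ℕ) (g : C(X, ℝ)) : ℝ :=
  pri L k * Real.exp (-(4 * (k : ℝ) +
    ∑ i ∈ Finset.Ico k n, (ys i - epred k g (xs i)) ^ 2) / 8)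

lemma wt_pos {X : Type*} [TopologicalSpace X] (L : ℝ) (xs : ℕ → X) (ys : ℕ → ℝ) (n k : ℕ) (g : C(X, ℝ)) :
    0 < wt L xs ys n k g := mul_pos (pri_pos L k) (Real.exp_pos _)

/-- The aggregated prediction at round `n` given signal `x₀`. -/
def muF {X : Type*} [TopologicalSpace X] (L : ℝ) (net : ℕ → Finset C(X, ℝ)) (xs : ℕ → X) (ys : ℕ → ℝ) (n : ℕ) (x₀ : X) : ℝ :=
  (∑ k ∈ Finset.range (n + 1), ∑ g ∈ net (k + 1), wt L xs ys n k g * epred k g x₀) /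
    (∑ k ∈ Finset.range (n + 1), ∑ g ∈ net (k + 1), wt L xs ys n k g)

lemma epred_mem {X : Type*} [TopologicalSpace X] (k : ℕ) (g : C(X, ℝ)) (x₀ : X) :
    epred k g x₀ ∈ Set.Icc (-1 : ℝ) 1 := clip_mem _

lemma regret_core {X : Type u} [MetricSpace X] [CompactSpace X]
    (L : ℝ) (net : ℕ → Finset C(X, ℝ))
    (hcard : ∀ k : ℕ, (((net (k + 1)).card : ℝ)) ≤ Real.exp (2 * ((k : ℝ) + 1) * L * Real.log 2))
    (hnempty : ∀ k : ℕ, (net (k + 1)).Nonempty)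
    (x : ℕ → X) (y : ℕ → ℝ) (hy : ∀ n, y n ∈ Set.Icc (-1 : ℝ) 1) :
    (∀ N : ℕ, ∑ i ∈ Finset.range N, (y i - muF L net x y i (x i)) ^ 2 ≤ 4 * N) ∧
    (∀ N k : ℕ, ∀ g : C(X, ℝ), k < N → g ∈ net (k + 1) →
      ∑ i ∈ Finset.range N, (y i - muF L net x y i (x i)) ^ 2 ≤
        4 * k + (∑ i ∈ Finset.range N, (y i - epred k g (x i)) ^ 2) +
          8 * (1 + 2 * L) * ((k : ℝ) + 1) * Real.log 2) := by
  set μ : ℕ → ℝ := fun n => muF L net x y n (x n) with hμdef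
  -- positivity of denominators
  have hDpos : ∀ n, 0 < ∑ k ∈ Finset.range (n + 1), ∑ g ∈ net (k + 1), wt L x y n k g := by
    intro n
    apply Finset.sum_pos'
    · intro k _
      exact Finset.sum_nonneg fun g _ => (wt_pos L x y n k g).le
    · exact ⟨0, Finset.mem_range.mpr (Nat.succ_pos n),
        Finset.sum_pos (fun g _ => wt_pos L x y n 0 g) (hnempty 0)⟩
  -- the prediction is in [-1, 1]
  have hμmem : ∀ n, μ n ∈ Set.Icc (-1 : ℝ) 1 := by
    intro n
    have habs : |∑ k ∈ Finset.range (n + 1), ∑ g ∈ net (k + 1), wt L x y n k g * epred k g (x n)|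
        ≤ ∑ k ∈ Finset.range (n + 1), ∑ g ∈ net (k + 1), wt L x y n k g := by
      refine le_trans (Finset.abs_sum_le_sum_abs _ _) ?_
      refine Finset.sum_le_sum fun k _ => ?_
      refine le_trans (Finset.abs_sum_le_sum_abs _ _) ?_
      refine Finset.sum_le_sum fun g _ => ?_
      rw [abs_mul, abs_of_pos (wt_pos L x y n k g)]
      have h1 : |epred k g (x n)| ≤ 1 := abs_le.mpr ⟨(epred_mem k g (x n)).1, (epred_mem k g (x n)).2⟩
      nlinarith [wt_pos L x y n k g, abs_nonneg (epred k g (x n))]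
    rw [Set.mem_Icc, ← abs_le]
    have : μ n = (∑ k ∈ Finset.range (n + 1), ∑ g ∈ net (k + 1), wt L x y n k g * epred k g (x n)) /
        (∑ k ∈ Finset.range (n + 1), ∑ g ∈ net (k + 1), wt L x y n k g) := rfl
    rw [this, abs_div, abs_of_pos (hDpos n), div_le_one (hDpos n)]
    exact habs
  have hloss4 : ∀ n, (y n - μ n) ^ 2 ≤ 4 := by
    intro n
    obtain ⟨h1, h2⟩ := hy n
    obtain ⟨h3, h4⟩ := hμmem n
    nlinarith
  have hA4 : ∀ n : ℕ, ∑ i ∈ Finset.range n, (y i - μ i) ^ 2 ≤ 4 * n := by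
    intro n
    calc ∑ i ∈ Finset.range n, (y i - μ i) ^ 2 ≤ ∑ _i ∈ Finset.range n, (4 : ℝ) :=
          Finset.sum_le_sum fun i _ => hloss4 i
      _ = 4 * n := by simp [mul_comm]
  -- Jensen step
  have hJ : ∀ n, ∑ k ∈ Finset.range (n + 1), ∑ g ∈ net (k + 1),
        wt L x y n k g * Real.exp (-(y n - epred k g (x n)) ^ 2 / 8)
      ≤ Real.exp (-(y n - μ n) ^ 2 / 8) *
        ∑ k ∈ Finset.range (n + 1), ∑ g ∈ net (k + 1), wt L x y n k g := by
    intro n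
    have hμn : μ n = (∑ e ∈ (Finset.range (n + 1)).sigma (fun k => net (k + 1)),
          wt L x y n e.1 e.2 * epred e.1 e.2 (x n)) /
        (∑ e ∈ (Finset.range (n + 1)).sigma (fun k => net (k + 1)), wt L x y n e.1 e.2) := by
      have : μ n = muF L net x y n (x n) := rfl
      rw [this]
      unfold muF
      rw [Finset.sum_sigma' (f := fun k g => wt L x y n k g * epred k g (x n)),
        Finset.sum_sigma' (f := fun k (g : C(X, ℝ)) => wt L x y n k g)]
    have hpos : 0 < ∑ e ∈ (Finset.range (n + 1)).sigma (fun k => net (k + 1)),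
        wt L x y n e.1 e.2 := by
      rw [← Finset.sum_sigma' (f := fun k (g : C(X, ℝ)) => wt L x y n k g)]
      exact hDpos n
    rw [Finset.sum_sigma' (f := fun k g =>
        wt L x y n k g * Real.exp (-(y n - epred k g (x n)) ^ 2 / 8)),
      Finset.sum_sigma' (f := fun k (g : C(X, ℝ)) => wt L x y n k g), hμn]
    exact jensen_step (hy n) _ _ _ (fun e _ => (wt_pos L x y n e.1 e.2).le) hpos
      (fun e _ => epred_mem e.1 e.2 (x n))
  -- evolution of weights
  have hwstep : ∀ n k, k ≤ n → ∀ g : C(X, ℝ), wt L x y (n + 1) k g =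
      wt L x y n k g * Real.exp (-(y n - epred k g (x n)) ^ 2 / 8) := by
    intro n k hk g
    unfold wt
    rw [Nat.Ico_succ_right_eq_insert_Ico hk, Finset.sum_insert Finset.right_notMem_Ico,
      mul_assoc, ← Real.exp_add]
    congr 2
    ring
  have hwdiag : ∀ n, ∀ g : C(X, ℝ), wt L x y n n g =
      pri L n * Real.exp (-(4 * (n : ℝ)) / 8) := by
    intro n g
    unfold wt
    rw [Finset.Ico_self, Finset.sum_empty, add_zero]
  -- the potential
  set Φ : ℕ → ℝ := fun n => Real.exp ((∑ i ∈ Finset.range n, (y i - μ i) ^ 2) / 8) *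
    ∑ k ∈ Finset.range n, ∑ g ∈ net (k + 1), wt L x y n k g with hΦdef
  have hstep : ∀ n, Φ (n + 1) ≤ Φ n + ((2 : ℝ)⁻¹) ^ (n + 1) := by
    intro n
    have e1 : ∑ k ∈ Finset.range (n + 1), ∑ g ∈ net (k + 1), wt L x y (n + 1) k g =
        ∑ k ∈ Finset.range (n + 1), ∑ g ∈ net (k + 1),
          wt L x y n k g * Real.exp (-(y n - epred k g (x n)) ^ 2 / 8) := by
      refine Finset.sum_congr rfl fun k hk => Finset.sum_congr rfl fun g _ => ?_
      exact hwstep n k (Nat.lt_succ_iff.mp (Finset.mem_range.mp hk)) g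
    have e2 : Φ (n + 1) = Real.exp ((∑ i ∈ Finset.range n, (y i - μ i) ^ 2) / 8) *
        Real.exp ((y n - μ n) ^ 2 / 8) *
        ∑ k ∈ Finset.range (n + 1), ∑ g ∈ net (k + 1),
          wt L x y n k g * Real.exp (-(y n - epred k g (x n)) ^ 2 / 8) := by
      rw [hΦdef]
      simp only []
      rw [Finset.sum_range_succ (f := fun i => (y i - μ i) ^ 2), e1, ← Real.exp_add]
      congr 2
      ring
    have e3 : Φ (n + 1) ≤ Real.exp ((∑ i ∈ Finset.range n, (y i - μ i) ^ 2) / 8) *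
        Real.exp ((y n - μ n) ^ 2 / 8) * (Real.exp (-(y n - μ n) ^ 2 / 8) *
        ∑ k ∈ Finset.range (n + 1), ∑ g ∈ net (k + 1), wt L x y n k g) := by
      rw [e2]
      exact mul_le_mul_of_nonneg_left (hJ n) (by positivity)
    have e4 : Real.exp ((∑ i ∈ Finset.range n, (y i - μ i) ^ 2) / 8) *
        Real.exp ((y n - μ n) ^ 2 / 8) * (Real.exp (-(y n - μ n) ^ 2 / 8) *
        ∑ k ∈ Finset.range (n + 1), ∑ g ∈ net (k + 1), wt L x y n k g) =
        Real.exp ((∑ i ∈ Finset.range n, (y i - μ i) ^ 2) / 8) *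
        ∑ k ∈ Finset.range (n + 1), ∑ g ∈ net (k + 1), wt L x y n k g := by
      rw [← Real.exp_add, ← mul_assoc, ← Real.exp_add]
      rw [show (∑ i ∈ Finset.range n, (y i - μ i) ^ 2) / 8 + (y n - μ n) ^ 2 / 8 +
        -(y n - μ n) ^ 2 / 8 = (∑ i ∈ Finset.range n, (y i - μ i) ^ 2) / 8 by ring]
    have e5 : Real.exp ((∑ i ∈ Finset.range n, (y i - μ i) ^ 2) / 8) *
        ∑ k ∈ Finset.range (n + 1), ∑ g ∈ net (k + 1), wt L x y n k g =
        Φ n + Real.exp ((∑ i ∈ Finset.range n, (y i - μ i) ^ 2) / 8) *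
          ∑ g ∈ net (n + 1), wt L x y n n g := by
      rw [hΦdef]
      simp only []
      rw [Finset.sum_range_succ (f := fun k => ∑ g ∈ net (k + 1), wt L x y n k g), mul_add]
    have e6 : Real.exp ((∑ i ∈ Finset.range n, (y i - μ i) ^ 2) / 8) *
        ∑ g ∈ net (n + 1), wt L x y n n g ≤ ((2 : ℝ)⁻¹) ^ (n + 1) := by
      have h1 : ∑ g ∈ net (n + 1), wt L x y n n g =
          ((net (n + 1)).card : ℝ) * (pri L n * Real.exp (-(4 * (n : ℝ)) / 8)) := by
        rw [Finset.sum_congr rfl fun g _ => hwdiag n g, Finset.sum_const, nsmul_eq_mul]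
      rw [h1]
      have h2 : Real.exp ((∑ i ∈ Finset.range n, (y i - μ i) ^ 2) / 8) ≤
          Real.exp ((4 * (n : ℝ)) / 8) := by
        apply Real.exp_le_exp.mpr
        have := hA4 n
        linarith
      have h3 : (0 : ℝ) ≤ ((net (n + 1)).card : ℝ) * (pri L n * Real.exp (-(4 * (n : ℝ)) / 8)) :=
        mul_nonneg (Nat.cast_nonneg _) (mul_nonneg (pri_pos L n).le (Real.exp_nonneg _))
      calc Real.exp ((∑ i ∈ Finset.range n, (y i - μ i) ^ 2) / 8) *
            (((net (n + 1)).card : ℝ) * (pri L n * Real.exp (-(4 * (n : ℝ)) / 8)))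
          ≤ Real.exp ((4 * (n : ℝ)) / 8) *
            (((net (n + 1)).card : ℝ) * (pri L n * Real.exp (-(4 * (n : ℝ)) / 8))) :=
            mul_le_mul_of_nonneg_right h2 h3
        _ = ((net (n + 1)).card : ℝ) * pri L n := by
            rw [mul_comm (Real.exp ((4 * (n : ℝ)) / 8))]
            rw [mul_assoc, mul_assoc, ← Real.exp_add]
            rw [show -(4 * (n : ℝ)) / 8 + (4 * (n : ℝ)) / 8 = 0 by ring, Real.exp_zero, mul_one]
        _ ≤ Real.exp (2 * ((n : ℝ) + 1) * L * Real.log 2) * pri L n :=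
            mul_le_mul_of_nonneg_right (hcard n) (pri_pos L n).le
        _ = ((2 : ℝ)⁻¹) ^ (n + 1) := by
            unfold pri
            rw [← Real.exp_add]
            rw [show 2 * ((n : ℝ) + 1) * L * Real.log 2 +
              -((1 + 2 * L) * ((n : ℝ) + 1)) * Real.log 2 =
              ((n : ℕ) + 1 : ℕ) * (-Real.log 2) by push_cast; ring]
            rw [Real.exp_nat_mul, Real.exp_neg, Real.exp_log (by norm_num : (0:ℝ) < 2)]
    linarith [e3, e4 ▸ e3, e5, e6]
  have hΦle : ∀ n, Φ n ≤ 1 := by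
    have haux : ∀ n, Φ n ≤ ∑ k ∈ Finset.range n, ((2 : ℝ)⁻¹) ^ (k + 1) := by
      intro n
      induction n with
      | zero => simp [hΦdef]
      | succ m ih =>
        rw [Finset.sum_range_succ]
        have := hstep m
        linarith
    intro n
    exact le_trans (haux n) (sum_halves n)
  constructor
  · exact hA4
  · intro N k g hkN hg
    -- single term bound
    have hterm : Real.exp ((∑ i ∈ Finset.range N, (y i - μ i) ^ 2) / 8) * wt L x y N k g ≤ 1 := by
      refine le_trans ?_ (hΦle N)
      rw [hΦdef]
      simp only []
      apply mul_le_mul_of_nonneg_left ?_ (Real.exp_nonneg _)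
      calc wt L x y N k g ≤ ∑ g' ∈ net (k + 1), wt L x y N k g' :=
            Finset.single_le_sum (fun g' _ => (wt_pos L x y N k g').le) hg
        _ ≤ ∑ k' ∈ Finset.range N, ∑ g' ∈ net (k' + 1), wt L x y N k' g' :=
            Finset.single_le_sum
              (f := fun k' => ∑ g' ∈ net (k' + 1), wt L x y N k' g')
              (fun k' _ => Finset.sum_nonneg fun g' _ => (wt_pos L x y N k' g').le)
              (Finset.mem_range.mpr hkN)
    have hS : ∑ i ∈ Finset.Ico k N, (y i - epred k g (x i)) ^ 2 ≤
        ∑ i ∈ Finset.range N, (y i - epred k g (x i)) ^ 2 := by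
      apply Finset.sum_le_sum_of_subset_of_nonneg
      · intro i hi
        rw [Finset.mem_range]
        exact (Finset.mem_Ico.mp hi).2
      · intro i _ _
        positivity
    -- unfold the weight and take logs
    unfold wt pri at hterm
    rw [← mul_assoc, ← Real.exp_add, ← Real.exp_add, Real.exp_le_one_iff] at hterm
    have hlog := hterm
    -- hlog : A_N/8 + (-(1+2L)(k+1) log 2) + (-(4k + S)/8) ≤ 0
    nlinarith [hS]
variable {X : Type*} [TopologicalSpace X]

/-- The prediction strategy. -/
def strat (L : ℝ) (net : ℕ → Finset C(X, ℝ)) : List (X × ℝ) → X → ℝ := fun h x₀ =>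
  muF L net (fun i => (h.getD i (x₀, 0)).1) (fun i => (h.getD i (x₀, 0)).2) h.length x₀

lemma wt_congr (L : ℝ) {xs xs' : ℕ → X} {ys ys' : ℕ → ℝ} {n : ℕ}
    (hxs : ∀ i < n, xs i = xs' i) (hys : ∀ i < n, ys i = ys' i) (k : ℕ) (g : C(X, ℝ)) :
    wt L xs ys n k g = wt L xs' ys' n k g := by
  have hsum : ∑ i ∈ Finset.Ico k n, (ys i - epred k g (xs i)) ^ 2 =
      ∑ i ∈ Finset.Ico k n, (ys' i - epred k g (xs' i)) ^ 2 := by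
    apply Finset.sum_congr rfl
    intro i hi
    have hin : i < n := (Finset.mem_Ico.mp hi).2
    rw [hxs i hin, hys i hin]
  unfold wt
  rw [hsum]

lemma muF_congr (L : ℝ) (net : ℕ → Finset C(X, ℝ)) {xs xs' : ℕ → X} {ys ys' : ℕ → ℝ} {n : ℕ}
    (hxs : ∀ i < n, xs i = xs' i) (hys : ∀ i < n, ys i = ys' i) (x₀ : X) :
    muF L net xs ys n x₀ = muF L net xs' ys' n x₀ := by
  have h1 : ∀ F : ℕ → C(X, ℝ) → ℝ,
      ∑ k ∈ Finset.range (n + 1), ∑ g ∈ net (k + 1), wt L xs ys n k g * F k g =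
      ∑ k ∈ Finset.range (n + 1), ∑ g ∈ net (k + 1), wt L xs' ys' n k g * F k g := by
    intro F
    exact Finset.sum_congr rfl fun k _ => Finset.sum_congr rfl fun g _ => by
      rw [wt_congr L hxs hys k g]
  unfold muF
  rw [show (∑ k ∈ Finset.range (n + 1), ∑ g ∈ net (k + 1), wt L xs ys n k g * epred k g x₀)
      = ∑ k ∈ Finset.range (n + 1), ∑ g ∈ net (k + 1), wt L xs' ys' n k g * epred k g x₀
    from h1 _]
  rw [show (∑ k ∈ Finset.range (n + 1), ∑ g ∈ net (k + 1), wt L xs ys n k g)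
      = ∑ k ∈ Finset.range (n + 1), ∑ g ∈ net (k + 1), wt L xs' ys' n k g by
    simpa using h1 (fun _ _ => 1)]

lemma preds_strat (L : ℝ) (net : ℕ → Finset C(X, ℝ)) (x : ℕ → X) (y : ℕ → ℝ) (n : ℕ) :
    strat L net ((List.range n).map fun i => (x i, y i)) (x n) = muF L net x y n (x n) := by
  unfold strat
  set l := (List.range n).map fun i => (x i, y i) with hl
  have hlen : l.length = n := by simp [hl]
  have hget : ∀ i < n, l.getD i (x n, 0) = (x i, y i) := by
    intro i hi
    have hi' : i < l.length := by rw [hlen]; exact hi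
    rw [List.getD_eq_getElem l _ hi']
    simp [hl]
  rw [hlen]
  exact muF_congr L net (fun i hi => by rw [hget i hi]) (fun i hi => by rw [hget i hi]) _

lemma net_exists {X : Type u} [MetricSpace X] [CompactSpace X]
    {𝓕 : Type v} [NormedAddCommGroup 𝓕] [NormedSpace ℝ 𝓕] [FiniteDimensional ℝ 𝓕]
    (ι : 𝓕 →ₗ[ℝ] C(X, ℝ)) (L : ℝ)
    (hcont : Continuous ι)
    (hent : ∀ ε ∈ Set.Ioc (0 : ℝ) (1 / 2),
        metricEntropy (⇑ι '' Metric.closedBall (0 : 𝓕) 1) ε ≤ L * Real.logb 2 (1 / ε))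
    (m : ℕ) (hm : 1 ≤ m) :
    ∃ S : Finset C(X, ℝ), ((S.card : ℝ) ≤ Real.exp (2 * m * L * Real.log 2)) ∧
      ∀ f : 𝓕, ‖f‖ ≤ 1 → ∃ g ∈ S, dist (ι f) g ≤ ((2 : ℝ) ^ (2 * m))⁻¹ := by
  set ε : ℝ := ((2 : ℝ) ^ (2 * m))⁻¹ with hεdef
  have hpow1 : (2 : ℝ) ≤ (2 : ℝ) ^ (2 * m) := by
    calc (2 : ℝ) = 2 ^ 1 := (pow_one 2).symm
    _ ≤ 2 ^ (2 * m) := pow_le_pow_right₀ (by norm_num) (by omega)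
  have hε0 : 0 < ε := by positivity
  have hε2 : ε ≤ 1 / 2 := by
    rw [hεdef]
    rw [show (1 : ℝ) / 2 = 2⁻¹ by norm_num]
    exact inv_anti₀ (by norm_num) hpow1
  set A : Set C(X, ℝ) := ⇑ι '' Metric.closedBall (0 : 𝓕) 1 with hAdef
  have hA : IsCompact A := (isCompact_closedBall (0 : 𝓕) 1).image hcont
  have hne : {n : ℕ | ∃ S : Finset C(X, ℝ), ↑S ⊆ A ∧ S.card = n ∧
      ∀ a ∈ A, ∃ b ∈ S, dist a b ≤ ε}.Nonempty := by
    obtain ⟨t, hts, htf, hcov⟩ := Metric.finite_approx_of_totallyBounded hA.totallyBounded ε hε0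
    refine ⟨htf.toFinset.card, htf.toFinset, ?_, rfl, ?_⟩
    · rw [Set.Finite.coe_toFinset]; exact hts
    · intro a ha
      obtain ⟨b, hb, hab⟩ := Set.mem_iUnion₂.mp (hcov ha)
      exact ⟨b, htf.mem_toFinset.mpr hb, le_of_lt hab⟩
  obtain ⟨S₀, hS₀A, hS₀card, hS₀cov⟩ := Nat.sInf_mem hne
  have hentε := hent ε ⟨hε0, hε2⟩
  have h1ε : (1 : ℝ) / ε = (2 : ℝ) ^ (2 * m) := by
    rw [hεdef, one_div, inv_inv]
  have hlogb : Real.logb 2 ((1 : ℝ) / ε) = 2 * m := by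
    rw [h1ε, Real.logb_pow]
    rw [Real.logb_self_eq_one (by norm_num : (1:ℝ) < 2)]
    push_cast; ring
  rw [hlogb] at hentε
  -- hentε : metricEntropy A ε ≤ L * (2 * m)
  have hcard : ((coveringNumber A ε : ℝ)) ≤ Real.exp (2 * m * L * Real.log 2) := by
    rcases Nat.eq_zero_or_pos (coveringNumber A ε) with h0 | hpos
    · rw [h0]; exact_mod_cast le_of_lt (Real.exp_pos _)
    · have hc1 : (1 : ℝ) ≤ (coveringNumber A ε : ℝ) := by exact_mod_cast hpos
      have hlog : Real.log (coveringNumber A ε) ≤ L * (2 * m) * Real.log 2 := by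
        have := hentε
        unfold metricEntropy Real.logb at this
        rw [div_le_iff₀ (Real.log_pos (by norm_num))] at this
        linarith
      calc ((coveringNumber A ε : ℝ)) = Real.exp (Real.log (coveringNumber A ε)) :=
            (Real.exp_log (by linarith)).symm
        _ ≤ Real.exp (2 * m * L * Real.log 2) := by
            apply Real.exp_le_exp.mpr
            calc Real.log (coveringNumber A ε) ≤ L * (2 * m) * Real.log 2 := hlog
              _ = 2 * m * L * Real.log 2 := by ring
  refine ⟨S₀, by rw [hS₀card]; exact hcard, ?_⟩
  intro f hf
  have hfA : ι f ∈ A := ⟨f, by simpa [Metric.mem_closedBall] using hf, rfl⟩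
  exact hS₀cov (ι f) hfA

lemma four_le_two_pow {N : ℕ} (hN : 2 ≤ N) : (N : ℝ) ≤ (2 : ℝ) ^ (N - 1) := by
  induction N with
  | zero => omega
  | succ n ih =>
    rcases Nat.lt_or_ge n 2 with h | h
    · interval_cases n
      · omega
      · norm_num
    · have := ih (by omega)
      have h2 : n + 1 - 1 = (n - 1) + 1 := by omega
      rw [h2, pow_succ]
      have hp : (1:ℝ) ≤ (2:ℝ) ^ (n-1) := one_le_pow₀ (by norm_num)
      push_cast
      nlinarith

end OLRAux

set_option maxHeartbeats 1000000 in
/-- Corollary 2*: non-asymptotic regret bound for a finite-dimensional Banach space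
`𝓕` embedded in `C(X)`, valid for all `N ≥ 2`, with explicit (logarithmic) dependence
on the norm of the competitor. -/
theorem stmt14 : ∃ C : ℝ, 0 < C ∧
    ∀ (X : Type u) [MetricSpace X] [CompactSpace X]
      (𝓕 : Type v) [NormedAddCommGroup 𝓕] [NormedSpace ℝ 𝓕] [CompleteSpace 𝓕]
      [FiniteDimensional ℝ 𝓕]
      (ι : 𝓕 →ₗ[ℝ] C(X, ℝ)) (L : ℝ),
      Function.Injective ι →
      Continuous ι →
      1 ≤ L →
      (∀ ε ∈ Set.Ioc (0 : ℝ) (1 / 2),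
        metricEntropy (⇑ι '' Metric.closedBall (0 : 𝓕) 1) ε ≤
          L * Real.logb 2 (1 / ε)) →
      ∃ σ : List (X × ℝ) → X → ℝ,
        ∀ x : ℕ → X, ∀ y : ℕ → ℝ, (∀ n, y n ∈ Set.Icc (-1 : ℝ) 1) →
          ∀ N : ℕ, 2 ≤ N → ∀ f : 𝓕,
            ∑ n ∈ Finset.range N, (y n - preds σ x y n) ^ 2 ≤
              ∑ n ∈ Finset.range N, (y n - ι f (x n)) ^ 2 +
                C * L * (log2plus ‖f‖ + Real.logb 2 N) := by
  refine ⟨100, by norm_num, ?_⟩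
  intro X _ _ 𝓕 _ _ _ _ ι L hinj hcont hL hent
  have hlog2pos : (0 : ℝ) < Real.log 2 := Real.log_pos one_lt_two
  have hlog2d9 : Real.log 2 ≤ 0.7 := le_trans Real.log_two_lt_d9.le (by norm_num)
  -- obtain the nets
  have hex : ∀ m : ℕ, ∃ S : Finset C(X, ℝ), 1 ≤ m →
      (((S.card : ℝ) ≤ Real.exp (2 * m * L * Real.log 2)) ∧
        ∀ f : 𝓕, ‖f‖ ≤ 1 → ∃ g ∈ S, dist (ι f) g ≤ ((2 : ℝ) ^ (2 * m))⁻¹) := by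
    intro m
    rcases Nat.eq_zero_or_pos m with h0 | h1
    · exact ⟨∅, by omega⟩
    · obtain ⟨S, h⟩ := net_exists ι L hcont hent m h1
      exact ⟨S, fun _ => h⟩
  choose net hnet using hex
  have hcard : ∀ k : ℕ, (((net (k + 1)).card : ℝ)) ≤
      Real.exp (2 * ((k : ℝ) + 1) * L * Real.log 2) := by
    intro k
    have h := (hnet (k + 1) (by omega)).1
    have : ((k + 1 : ℕ) : ℝ) = (k : ℝ) + 1 := by push_cast; ring
    rwa [this] at h
  have hnonempty : ∀ k : ℕ, (net (k + 1)).Nonempty := by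
    intro k
    obtain ⟨g, hg, -⟩ := (hnet (k + 1) (by omega)).2 0 (by simp)
    exact ⟨g, hg⟩
  -- scaled covering property
  have hcov : ∀ k : ℕ, ∀ f : 𝓕, ‖f‖ ≤ (2 : ℝ) ^ (k + 1) →
      ∃ g ∈ net (k + 1), ∀ x₀ : X,
        |(ι f) x₀ - (2 : ℝ) ^ (k + 1) * g x₀| ≤ ((2 : ℝ) ^ (k + 1))⁻¹ := by
    intro k f hf
    have hp : (0 : ℝ) < (2 : ℝ) ^ (k + 1) := by positivity
    set c : 𝓕 := ((2 : ℝ) ^ (k + 1))⁻¹ • f with hcdef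
    have hc : ‖c‖ ≤ 1 := by
      rw [hcdef, norm_smul, norm_inv, Real.norm_eq_abs, abs_of_pos hp]
      calc ((2 : ℝ) ^ (k + 1))⁻¹ * ‖f‖ ≤ ((2 : ℝ) ^ (k + 1))⁻¹ * (2 : ℝ) ^ (k + 1) :=
            mul_le_mul_of_nonneg_left hf (by positivity)
        _ = 1 := inv_mul_cancel₀ (ne_of_gt hp)
    obtain ⟨g, hg, hd⟩ := (hnet (k + 1) (by omega)).2 c hc
    refine ⟨g, hg, fun x₀ => ?_⟩
    have hfc : f = (2 : ℝ) ^ (k + 1) • c := by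
      rw [hcdef, smul_smul, mul_inv_cancel₀ (ne_of_gt hp), one_smul]
    have h1 : (ι f) x₀ = (2 : ℝ) ^ (k + 1) * (ι c) x₀ := by
      rw [hfc, map_smul]
      simp
    rw [h1, ← mul_sub, abs_mul, abs_of_pos hp]
    have h2 : |(ι c) x₀ - g x₀| ≤ dist (ι c) g := by
      rw [← Real.dist_eq]
      exact ContinuousMap.dist_apply_le_dist x₀
    calc (2 : ℝ) ^ (k + 1) * |(ι c) x₀ - g x₀| ≤
          (2 : ℝ) ^ (k + 1) * ((2 : ℝ) ^ (2 * (k + 1)))⁻¹ :=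
          mul_le_mul_of_nonneg_left (h2.trans hd) hp.le
      _ = ((2 : ℝ) ^ (k + 1))⁻¹ := by
          have hsplit : ((2 : ℝ) ^ (2 * (k + 1)))⁻¹ =
              ((2 : ℝ) ^ (k + 1))⁻¹ * ((2 : ℝ) ^ (k + 1))⁻¹ := by
            rw [show 2 * (k + 1) = (k + 1) + (k + 1) by ring, pow_add, mul_inv]
          rw [hsplit, ← mul_assoc, mul_inv_cancel₀ (ne_of_gt hp), one_mul]
  -- the strategy
  refine ⟨strat L net, ?_⟩
  intro x y hy N hN f
  have hcore := regret_core L net hcard hnonempty x y hy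
  have hrw : ∑ n ∈ Finset.range N, (y n - preds (strat L net) x y n) ^ 2 =
      ∑ n ∈ Finset.range N, (y n - muF L net x y n (x n)) ^ 2 := by
    refine Finset.sum_congr rfl fun n _ => ?_
    rw [show preds (strat L net) x y n =
      strat L net ((List.range n).map fun i => (x i, y i)) (x n) from rfl, preds_strat]
  rw [hrw]
  have hN0 : (0 : ℝ) < (N : ℝ) := by
    have : (2 : ℝ) ≤ (N : ℝ) := by exact_mod_cast hN
    linarith
  set lp : ℝ := log2plus ‖f‖ with hlpdef
  set lN : ℝ := Real.logb 2 (N : ℝ) with hlNdef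
  have hlp0 : 0 ≤ lp := by
    rw [hlpdef]
    unfold log2plus
    split_ifs with h
    · exact Real.logb_nonneg one_lt_two h
    · exact le_refl 0
  have hlNlog : lN * Real.log 2 = Real.log N := by
    rw [hlNdef, Real.logb, div_mul_cancel₀ _ (ne_of_gt hlog2pos)]
  have hlN1 : 1 ≤ lN := by
    have h1 : Real.log 2 ≤ Real.log N := Real.log_le_log (by norm_num) (by exact_mod_cast hN)
    rw [hlNdef, Real.logb, le_div_iff₀ hlog2pos]
    linarith
  have hexp2 : ∀ j : ℕ, Real.exp ((j : ℝ) * Real.log 2) = (2 : ℝ) ^ j := by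
    intro j
    rw [Real.exp_nat_mul, Real.exp_log (by norm_num : (0 : ℝ) < 2)]
  set k₀ : ℕ := max ⌈lp⌉₊ ⌈lN⌉₊ with hk₀def
  have hlNk₀ : lN ≤ (k₀ : ℝ) := by
    refine le_trans (Nat.le_ceil lN) ?_
    exact_mod_cast Nat.cast_le.mpr (le_max_right _ _)
  have hNk : (N : ℝ) ≤ (2 : ℝ) ^ k₀ := by
    calc (N : ℝ) = Real.exp (Real.log N) := (Real.exp_log hN0).symm
      _ ≤ Real.exp ((k₀ : ℝ) * Real.log 2) := by
          apply Real.exp_le_exp.mpr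
          rw [← hlNlog]
          exact mul_le_mul_of_nonneg_right hlNk₀ hlog2pos.le
      _ = (2 : ℝ) ^ k₀ := hexp2 k₀
  have hfk : ‖f‖ ≤ (2 : ℝ) ^ (k₀ + 1) := by
    have hmono : (2 : ℝ) ^ k₀ ≤ (2 : ℝ) ^ (k₀ + 1) := by
      apply pow_le_pow_right₀ (by norm_num)
      omega
    by_cases h1 : 1 ≤ ‖f‖
    · have hlpf : lp = Real.logb 2 ‖f‖ := by rw [hlpdef]; unfold log2plus; rw [if_pos h1]
      have hlpk : lp ≤ (k₀ : ℝ) := by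
        refine le_trans (Nat.le_ceil lp) ?_
        exact_mod_cast Nat.cast_le.mpr (le_max_left _ _)
      have hnf : (0 : ℝ) < ‖f‖ := by linarith
      calc ‖f‖ = Real.exp (Real.log ‖f‖) := (Real.exp_log hnf).symm
        _ ≤ Real.exp ((k₀ : ℝ) * Real.log 2) := by
            apply Real.exp_le_exp.mpr
            have : Real.log ‖f‖ = lp * Real.log 2 := by
              rw [hlpf, Real.logb, div_mul_cancel₀ _ (ne_of_gt hlog2pos)]
            rw [this]
            exact mul_le_mul_of_nonneg_right hlpk hlog2pos.le
        _ = (2 : ℝ) ^ k₀ := hexp2 k₀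
        _ ≤ (2 : ℝ) ^ (k₀ + 1) := hmono
    · push_neg at h1
      have : (1 : ℝ) ≤ (2 : ℝ) ^ (k₀ + 1) := one_le_pow₀ (by norm_num)
      linarith
  have hT1 : 1 ≤ lp + lN := by linarith
  have hk3 : (k₀ : ℝ) + 1 ≤ 3 * (lp + lN) := by
    have c1 : (⌈lp⌉₊ : ℝ) < lp + 1 := Nat.ceil_lt_add_one hlp0
    have c2 : (⌈lN⌉₊ : ℝ) < lN + 1 := Nat.ceil_lt_add_one (by linarith)
    have c3 : (k₀ : ℝ) = max (⌈lp⌉₊ : ℝ) (⌈lN⌉₊ : ℝ) := by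
      rw [hk₀def]
      push_cast
      rfl
    have c4 : (k₀ : ℝ) < lp + lN + 1 := by
      rw [c3]
      apply max_lt <;> linarith
    linarith
  by_cases hcase : k₀ < N
  · -- main case: the good expert is awake
    obtain ⟨g, hg, happ⟩ := hcov k₀ f hfk
    have hmain := hcore.2 N k₀ g hcase hg
    have happrox : ∀ i : ℕ, (y i - epred k₀ g (x i)) ^ 2 ≤
        (y i - (ι f) (x i)) ^ 2 + 4 * ((2 : ℝ) ^ (k₀ + 1))⁻¹ := by
      intro i
      have hab : |clip ((2 : ℝ) ^ (k₀ + 1) * g (x i)) - clip ((ι f) (x i))| ≤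
          ((2 : ℝ) ^ (k₀ + 1))⁻¹ := by
        refine le_trans (clip_lip _ _) ?_
        rw [abs_sub_comm]
        exact happ (x i)
      have h2 := loss_close (hy i) (clip_mem ((2 : ℝ) ^ (k₀ + 1) * g (x i)))
        (clip_mem ((ι f) (x i))) hab
      have h3 := clip_sq_le (hy i) ((ι f) (x i))
      have h4 : epred k₀ g (x i) = clip ((2 : ℝ) ^ (k₀ + 1) * g (x i)) := rfl
      rw [h4]
      linarith
    have hsum : ∑ i ∈ Finset.range N, (y i - epred k₀ g (x i)) ^ 2 ≤
        (∑ i ∈ Finset.range N, (y i - (ι f) (x i)) ^ 2) +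
          (N : ℝ) * (4 * ((2 : ℝ) ^ (k₀ + 1))⁻¹) := by
      calc ∑ i ∈ Finset.range N, (y i - epred k₀ g (x i)) ^ 2 ≤
            ∑ i ∈ Finset.range N, ((y i - (ι f) (x i)) ^ 2 + 4 * ((2 : ℝ) ^ (k₀ + 1))⁻¹) :=
            Finset.sum_le_sum fun i _ => happrox i
        _ = (∑ i ∈ Finset.range N, (y i - (ι f) (x i)) ^ 2) +
            (N : ℝ) * (4 * ((2 : ℝ) ^ (k₀ + 1))⁻¹) := by
            rw [Finset.sum_add_distrib, Finset.sum_const, Finset.card_range, nsmul_eq_mul]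
    have hN2 : (N : ℝ) * (4 * ((2 : ℝ) ^ (k₀ + 1))⁻¹) ≤ 2 := by
      have hp : (0 : ℝ) < (2 : ℝ) ^ k₀ := by positivity
      have heq : (N : ℝ) * (4 * ((2 : ℝ) ^ (k₀ + 1))⁻¹) = 2 * ((N : ℝ) / (2 : ℝ) ^ k₀) := by
        rw [pow_succ]
        field_simp
        ring
      rw [heq]
      have : (N : ℝ) / (2 : ℝ) ^ k₀ ≤ 1 := (div_le_one hp).mpr hNk
      linarith
    -- final arithmetic
    have hK0 : (0 : ℝ) ≤ (k₀ : ℝ) + 1 := by positivity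
    have p1 : L * ((k₀ : ℝ) + 1) ≤ 3 * (L * (lp + lN)) := by
      calc L * ((k₀ : ℝ) + 1) ≤ L * (3 * (lp + lN)) :=
            mul_le_mul_of_nonneg_left hk3 (by linarith)
        _ = 3 * (L * (lp + lN)) := by ring
    have p2 : (k₀ : ℝ) + 1 ≤ L * ((k₀ : ℝ) + 1) := by nlinarith
    have p3 : 1 ≤ L * (lp + lN) := by nlinarith
    have hpos8 : (0 : ℝ) ≤ 8 * (1 + 2 * L) * ((k₀ : ℝ) + 1) := by nlinarith
    have p4 : 8 * (1 + 2 * L) * ((k₀ : ℝ) + 1) * Real.log 2 ≤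
        8 * (1 + 2 * L) * ((k₀ : ℝ) + 1) * 0.7 :=
      mul_le_mul_of_nonneg_left hlog2d9 hpos8
    have p5 : 8 * (1 + 2 * L) * ((k₀ : ℝ) + 1) * (0.7 : ℝ) =
        5.6 * ((k₀ : ℝ) + 1) + 11.2 * (L * ((k₀ : ℝ) + 1)) := by ring
    linarith [hmain, hsum, hN2, p1, p2, p3, p4, p5]
  · -- degenerate case: ‖f‖ is enormous compared to N
    rw [not_lt] at hcase
    have hceilN : ⌈lN⌉₊ < N := by
      have h2p := four_le_two_pow hN
      have hlogN : Real.log N ≤ ((N : ℝ) - 1) * Real.log 2 := by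
        calc Real.log N ≤ Real.log ((2 : ℝ) ^ (N - 1)) := Real.log_le_log hN0 h2p
          _ = ((N - 1 : ℕ) : ℝ) * Real.log 2 := by rw [Real.log_pow]
          _ = ((N : ℝ) - 1) * Real.log 2 := by
              rw [Nat.cast_sub (by omega)]
              norm_num
      have hlNN : lN ≤ (N : ℝ) - 1 := by
        rw [hlNdef, Real.logb, div_le_iff₀ hlog2pos]
        linarith
      have := Nat.ceil_lt_add_one (show (0 : ℝ) ≤ lN by linarith)
      have h5 : (⌈lN⌉₊ : ℝ) < (N : ℝ) := by linarith
      exact_mod_cast h5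
    have hlpbig : N ≤ ⌈lp⌉₊ := by
      by_contra hcon
      push_neg at hcon
      have : k₀ < N := max_lt hcon hceilN
      omega
    have hlpN : (N : ℝ) - 1 ≤ lp := by
      have c1 : (⌈lp⌉₊ : ℝ) < lp + 1 := Nat.ceil_lt_add_one hlp0
      have c2 : (N : ℝ) ≤ (⌈lp⌉₊ : ℝ) := by exact_mod_cast hlpbig
      linarith
    have hAN := hcore.1 N
    have hsum0 : (0 : ℝ) ≤ ∑ i ∈ Finset.range N, (y i - (ι f) (x i)) ^ 2 :=
      Finset.sum_nonneg fun i _ => by positivity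
    have hN2' : (2 : ℝ) ≤ (N : ℝ) := by exact_mod_cast hN
    nlinarith [hAN, hsum0, hlpN, hlN1, hL, hN2']
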